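/- The gradient of the smoothed dual function is Lipschitz: for D_μ(λ) = inf_{x∈X} (⟨λ, Ax⟩ + (μ/2)‖x‖²) with X compact convex, the map λ ↦ A x_{μ,λ} is Lipschitz continuous with constant ‖A‖²/μ. -/
import Mathlib


open scoped RealInnerProductSpace

/-- Variational inequality at a minimizer of the smoothed objective. -/
lemma smoothed_vi {n m : ℕ} (X : Set (EuclideanSpace ℝ (Fin n)))
    (hXcx : Convex ℝ X)
    (A : EuclideanSpace ℝ (Fin n) →L[ℝ] EuclideanSpace ℝ (Fin m))
    (mu : ℝ) (hmu : 0 ≤ mu)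
    (lam : EuclideanSpace ℝ (Fin m)) (x y : EuclideanSpace ℝ (Fin n))
    (hx : x ∈ X) (hy : y ∈ X)
    (hmin : IsMinOn (fun x => ⟪lam, A x⟫ + mu / 2 * ‖x‖ ^ 2) X x) :
    0 ≤ ⟪lam, A (y - x)⟫ + mu * ⟪x, y - x⟫ := by
  set d := y - x with hd
  set b := mu / 2 * ‖d‖ ^ 2 with hb
  have hb0 : 0 ≤ b := by positivity
  refine le_of_forall_pos_le_add fun ε hε => ?_
  set t := min 1 (ε / (b + 1)) with htdef
  have ht0 : 0 < t := lt_min one_pos (by positivity)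
  have ht1 : t ≤ 1 := min_le_left _ _
  have htb : t * b ≤ ε := by
    have h1 : t ≤ ε / (b + 1) := min_le_right _ _
    have : t * b ≤ (ε / (b + 1)) * b := by
      apply mul_le_mul_of_nonneg_right h1 hb0
    calc t * b ≤ (ε / (b + 1)) * b := this
      _ ≤ ε := by
          rw [div_mul_eq_mul_div, div_le_iff₀ (by linarith)]
          nlinarith
  have hmem : x + t • d ∈ X := by
    have h := hXcx hx hy (by linarith : (0:ℝ) ≤ 1 - t) ht0.le (by ring)
    convert h using 1
    rw [hd]
    module
  have hle := hmin hmem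
  simp only [Set.mem_setOf_eq] at hle
  have hexp1 : ⟪lam, A (x + t • d)⟫ = ⟪lam, A x⟫ + t * ⟪lam, A d⟫ := by
    rw [map_add, map_smul, inner_add_right, real_inner_smul_right]
  have hexp2 : ‖x + t • d‖ ^ 2 = ‖x‖ ^ 2 + 2 * (t * ⟪x, d⟫) + t ^ 2 * ‖d‖ ^ 2 := by
    rw [norm_add_sq_real, real_inner_smul_right, norm_smul, mul_pow]
    simp [abs_of_pos ht0]
  rw [hexp1, hexp2] at hle
  nlinarith [sq_nonneg t, mul_pos ht0 ht0]

/-- The gradient map `λ ↦ A x_{μ,λ}` of the smoothed dual is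
Lipschitz with constant `‖A‖²/μ`. -/
theorem smoothed_dual_gradient_lipschitz
    (n m : ℕ) (X : Set (EuclideanSpace ℝ (Fin n)))
    (hXne : X.Nonempty) (hXcp : IsCompact X) (hXcx : Convex ℝ X)
    (A : EuclideanSpace ℝ (Fin n) →L[ℝ] EuclideanSpace ℝ (Fin m))
    (mu : ℝ) (hmu : 0 < mu)
    (xm : EuclideanSpace ℝ (Fin m) → EuclideanSpace ℝ (Fin n))
    (hxm_mem : ∀ lam, xm lam ∈ X)
    (hxm_min : ∀ lam,
      IsMinOn (fun x => ⟪lam, A x⟫ + mu / 2 * ‖x‖ ^ 2) X (xm lam)) :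
    ∀ lam₁ lam₂, ‖A (xm lam₁) - A (xm lam₂)‖ ≤ ‖A‖ ^ 2 / mu * ‖lam₁ - lam₂‖ := by
  intro lam₁ lam₂
  set x₁ := xm lam₁ with hx1
  set x₂ := xm lam₂ with hx2
  have a₁ := smoothed_vi X hXcx A mu hmu.le lam₁ x₁ x₂ (hxm_mem lam₁) (hxm_mem lam₂)
    (hxm_min lam₁)
  have a₂ := smoothed_vi X hXcx A mu hmu.le lam₂ x₂ x₁ (hxm_mem lam₂) (hxm_mem lam₁)
    (hxm_min lam₂)
  have hnormsq : ‖x₁ - x₂‖ ^ 2 = ⟪x₁, x₁⟫ - 2 * ⟪x₁, x₂⟫ + ⟪x₂, x₂⟫ := by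
    rw [← real_inner_self_eq_norm_sq]
    simp only [inner_sub_left, inner_sub_right]
    rw [real_inner_comm x₂ x₁]
    ring
  have h1 : mu * ‖x₁ - x₂‖ ^ 2 ≤ ⟪lam₁ - lam₂, A x₂ - A x₁⟫ := by
    simp only [map_sub, inner_sub_left, inner_sub_right] at a₁ a₂ ⊢
    nlinarith [hnormsq, real_inner_comm x₂ x₁]
  have h2 : ⟪lam₁ - lam₂, A x₂ - A x₁⟫ ≤ ‖lam₁ - lam₂‖ * ‖A x₂ - A x₁‖ :=
    real_inner_le_norm _ _
  have h3 : ‖A x₂ - A x₁‖ ≤ ‖A‖ * ‖x₁ - x₂‖ := by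
    rw [← map_sub, norm_sub_rev x₁ x₂]
    exact A.le_opNorm _
  have h4 : ‖A x₁ - A x₂‖ ≤ ‖A‖ * ‖x₁ - x₂‖ := by
    rw [← map_sub]; exact A.le_opNorm _
  have hA0 : 0 ≤ ‖A‖ := norm_nonneg _
  have hu0 : 0 ≤ ‖x₁ - x₂‖ := norm_nonneg _
  have hl0 : 0 ≤ ‖lam₁ - lam₂‖ := norm_nonneg _
  rcases eq_or_lt_of_le hu0 with h0 | hupos
  · calc ‖A x₁ - A x₂‖ ≤ ‖A‖ * ‖x₁ - x₂‖ := h4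
      _ = 0 := by rw [← h0]; ring
      _ ≤ ‖A‖ ^ 2 / mu * ‖lam₁ - lam₂‖ := by positivity
  · -- mu * ‖u‖^2 ≤ ‖Δλ‖ * ‖A‖ * ‖u‖, divide by ‖u‖
    have key : mu * ‖x₁ - x₂‖ ≤ ‖lam₁ - lam₂‖ * ‖A‖ := by
      have := h1.trans (h2.trans (by nlinarith : ‖lam₁ - lam₂‖ * ‖A x₂ - A x₁‖ ≤
        ‖lam₁ - lam₂‖ * (‖A‖ * ‖x₁ - x₂‖)))
      nlinarith
    have : ‖x₁ - x₂‖ ≤ ‖A‖ / mu * ‖lam₁ - lam₂‖ := by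
      rw [div_mul_eq_mul_div, le_div_iff₀ hmu]
      nlinarith
    calc ‖A x₁ - A x₂‖ ≤ ‖A‖ * ‖x₁ - x₂‖ := h4
      _ ≤ ‖A‖ * (‖A‖ / mu * ‖lam₁ - lam₂‖) := by nlinarith
      _ = ‖A‖ ^ 2 / mu * ‖lam₁ - lam₂‖ := by ring
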